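/- arXiv:2304.11231 — 3 statements merged into one kernel-verified Lean document; each statement's English description precedes it below -/
import Mathlib

section
/- Fix A₀ ∈ [0, π/2) and set d₀ = (cos A₀)/4. Let q ≥ 1 and let t ∈ ℂ satisfy |arg t| ≤ A₀ and 0 < |t| ≤ T₀. Consider G(W) = τW + 1 + E(W) where τ = 1 − qt + r(t) with |r(t)| ≤ C|t|² and |E(W)| ≤ C'/|W|. Then for T₀ sufficiently small (depending on q, A₀, C, C') and for all W with |W| > 1/(q d₀ |t|), one has |G(W)| < |W|. -/
/-!
In the Stolz angle `|arg t| ≤ A₀` one has `Re t ≥ cos A₀ · |t|`, so for `q|t| ≤ cos A₀` the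
point `s = qt` satisfies `|s|² ≤ Re s`, whence `|1 - s| ≤ 1 - Re s / 2`. Absorbing the
`O(t²)` error gives `|τ| ≤ 1 - 3δ/2` with `δ = q d₀ |t|`. For `δ|W| > 1` the drift `-3δ|W|/2`
then beats the constant `1` together with `|E(W)| ≤ C'/|W| < C'δ ≤ 1/2`.
-/

open Real

namespace Complex

lemma cos_mul_norm_le_re_of_abs_arg_le {A : ℝ} {t : ℂ} (hA : A ≤ π) (h : |t.arg| ≤ A) :
    Real.cos A * ‖t‖ ≤ t.re := by
  have hcos : Real.cos A ≤ Real.cos t.arg := by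
    rw [← Real.cos_abs t.arg]
    exact Real.cos_le_cos_of_nonneg_of_le_pi (abs_nonneg _) hA h
  rw [← norm_mul_cos_arg, mul_comm]
  exact mul_le_mul_of_nonneg_left hcos (norm_nonneg t)

lemma norm_one_sub_le_of_sq_norm_le_re {s : ℂ} (h : ‖s‖ ^ 2 ≤ s.re) :
    ‖1 - s‖ ≤ 1 - s.re / 2 := by
  have hre_le_one : s.re ≤ 1 := by
    nlinarith [re_le_norm s, norm_nonneg s]
  have hsq : ‖1 - s‖ ^ 2 = 1 - 2 * s.re + ‖s‖ ^ 2 := by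
    rw [Complex.sq_norm, Complex.sq_norm, normSq_apply, normSq_apply]
    simp only [sub_re, one_re, sub_im, one_im]
    ring
  refine abs_le_of_sq_le_sq' ?_ (by linarith) |>.2
  nlinarith

end Complex

open Complex in
lemma norm_le_one_sub_of_norm_sub_one_sub_mul_le {q c C : ℝ} {t τ : ℂ} (hq : 0 ≤ q)
    (hre : c * ‖t‖ ≤ t.re) (hqt : q * ‖t‖ ≤ c) (hCt : C * ‖t‖ ≤ q * c / 8)
    (hτ : ‖τ - (1 - q * t)‖ ≤ C * ‖t‖ ^ 2) :
    ‖τ‖ ≤ 1 - 3 / 2 * (q * (c / 4) * ‖t‖) := by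
  have hqt_re : (q * t : ℂ).re = q * t.re := by simp
  have hsq : ‖(q * t : ℂ)‖ ^ 2 ≤ (q * t : ℂ).re := by
    rw [hqt_re, norm_mul, norm_real, Real.norm_of_nonneg hq]
    nlinarith [mul_le_mul_of_nonneg_left hqt (mul_nonneg hq (norm_nonneg t)),
      mul_le_mul_of_nonneg_left hre hq]
  have h1 := norm_one_sub_le_of_sq_norm_le_re hsq
  rw [hqt_re] at h1
  calc ‖τ‖ ≤ ‖τ - (1 - q * t)‖ + ‖1 - (q * t : ℂ)‖ := norm_le_norm_sub_add τ _
    _ ≤ 1 - 3 / 2 * (q * (c / 4) * ‖t‖) := by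
      nlinarith [mul_le_mul_of_nonneg_right hCt (norm_nonneg t),
        mul_le_mul_of_nonneg_left hre hq]

lemma norm_mul_add_one_add_lt_norm {τ e W : ℂ} {δ : ℝ} (hτ : ‖τ‖ ≤ 1 - 3 / 2 * δ)
    (he : ‖e‖ ≤ 1 / 2) (hW : 1 < δ * ‖W‖) : ‖τ * W + 1 + e‖ < ‖W‖ :=
  calc ‖τ * W + 1 + e‖ ≤ ‖τ‖ * ‖W‖ + 1 + ‖e‖ := by
        grw [norm_add_le, norm_add_le, norm_mul, norm_one]
    _ < ‖W‖ := by nlinarith [mul_le_mul_of_nonneg_right hτ (norm_nonneg W)]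

/-- Attraction of `∞` for `G(W) = τW + 1 + O(1/W)` with `τ = 1 − qt + O(t²)` when `t`
lies in a Stolz angle: for `T₀` small enough and `|W| > 1/(q d₀ |t|)`, `|G(W)| < |W|`. -/
theorem G_near_infinity_attracting (q : ℕ) (hq : 1 ≤ q) (A₀ : ℝ)
    (hA₀ : A₀ ∈ Set.Ico 0 (π / 2)) (C C' : ℝ) (hC : 0 < C) (hC' : 0 < C') :
    ∃ T₀ > 0, ∀ (t : ℂ), t ≠ 0 → |t.arg| ≤ A₀ → ‖t‖ ≤ T₀ →
      ∀ (τ : ℂ) (G E : ℂ → ℂ),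
        ‖τ - (1 - (q : ℂ) * t)‖ ≤ C * ‖t‖ ^ 2 →
        (∀ W : ℂ, W ≠ 0 → ‖E W‖ ≤ C' / ‖W‖) →
        (∀ W : ℂ, G W = τ * W + 1 + E W) →
        ∀ W : ℂ, ‖W‖ > 1 / ((q : ℝ) * (Real.cos A₀ / 4) * ‖t‖) →
          ‖G W‖ < ‖W‖ := by
  obtain ⟨hA₀_nonneg, hA₀_lt⟩ := hA₀
  have hcos : 0 < cos A₀ := cos_pos_of_mem_Ioo ⟨by linarith [pi_pos], hA₀_lt⟩
  have hq₀ : (0 : ℝ) < q := by exact_mod_cast hq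
  refine ⟨min (min (cos A₀ / q) (q * cos A₀ / (8 * C))) (2 / (C' * (q * cos A₀))),
    by positivity, ?_⟩
  intro t ht harg hT τ G E hτ hE hG W hW
  have ht₀ : 0 < ‖t‖ := norm_pos_iff.2 ht
  have hqt : q * ‖t‖ ≤ cos A₀ := by
    rw [← le_div_iff₀' hq₀]; exact hT.trans ((min_le_left _ _).trans (min_le_left _ _))
  have hCt : C * ‖t‖ ≤ q * cos A₀ / 8 := by
    have := hT.trans ((min_le_left _ _).trans (min_le_right _ _))
    rw [le_div_iff₀ (by positivity)] at this
    linarith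
  have hC'δ : C' * (q * (cos A₀ / 4) * ‖t‖) ≤ 1 / 2 := by
    have := hT.trans (min_le_right _ _)
    rw [le_div_iff₀ (by positivity)] at this
    linarith
  have hWδ : 1 < q * (cos A₀ / 4) * ‖t‖ * ‖W‖ := by
    rwa [gt_iff_lt, div_lt_iff₀' (by positivity)] at hW
  have hW₀ : 0 < ‖W‖ := pos_of_mul_pos_right (one_pos.trans hWδ) (by positivity)
  have hEW : ‖E W‖ ≤ 1 / 2 :=
    calc ‖E W‖ ≤ C' / ‖W‖ := hE W (norm_pos_iff.1 hW₀)
      _ ≤ 1 / 2 := by rw [div_le_iff₀ hW₀]; nlinarith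
  have hτ_norm := norm_le_one_sub_of_norm_sub_one_sub_mul_le hq₀.le
    (Complex.cos_mul_norm_le_re_of_abs_arg_le (by linarith) harg) hqt hCt
    (by rwa [Complex.ofReal_natCast])
  rw [hG]
  exact norm_mul_add_one_add_lt_norm hτ_norm hEW hWδ
end

section
/- Fix A₀ ∈ [0, π/2) and set d₀ = (cos A₀)/4. Let q ≥ 1 and t ∈ ℂ with |arg t| ≤ A₀, 0 < |t| ≤ T₀, and consider G(W) = τW + 1 + E(W) where τ = 1 + qt + r(t), |r(t)| ≤ C|t|², |E(W)| ≤ C'/|W|. Then for T₀ sufficiently small, for all W with |W| > 1/(q d₀ |t|), one has |G(W)| > |W|. -/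
open Real

/-!
Write `d = q cos A₀ / 4`. In the Stolz angle `Re t ≥ |t| cos A₀`, so `|1 + qt| ≥ 1 + 4d|t|`, and for
`|t| ≤ 2d / C` the error `C|t|²` costs at most `2d|t|`, leaving `|τ| ≥ 1 + 2d|t|`. When `d|t||W| > 1`
this gives `|τW| > |W| + 2`, which absorbs the constant `1` and the error `|E(W)| ≤ C'/|W|`, at most `1`
once `|t| ≤ 1/(C'd)`.
-/

namespace Complex

theorem norm_mul_cos_le_re {z : ℂ} {A : ℝ} (hA : A ≤ π) (hz : |z.arg| ≤ A) :
    ‖z‖ * Real.cos A ≤ z.re := by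
  have hcos : Real.cos A ≤ Real.cos z.arg := by
    simpa only [Real.cos_abs] using Real.cos_le_cos_of_nonneg_of_le_pi (abs_nonneg _) hA hz
  calc ‖z‖ * Real.cos A ≤ ‖z‖ * Real.cos z.arg := by gcongr
    _ = z.re := norm_mul_cos_arg z

theorem one_add_mul_norm_mul_cos_le_norm_one_add_mul {t : ℂ} {A a : ℝ} (hA : A ≤ π)
    (ht : |t.arg| ≤ A) (ha : 0 ≤ a) : 1 + a * (‖t‖ * Real.cos A) ≤ ‖1 + a * t‖ :=
  calc 1 + a * (‖t‖ * Real.cos A) ≤ 1 + a * t.re := by gcongr; exact norm_mul_cos_le_re hA ht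
    _ = (1 + a * t).re := by simp
    _ ≤ ‖1 + a * t‖ := re_le_norm _

theorem one_add_mul_norm_le_norm_of_norm_sub_le {t τ : ℂ} {A a C : ℝ} (hA : A ≤ π)
    (ht : |t.arg| ≤ A) (ha : 0 ≤ a) (hτ : ‖τ - (1 + a * t)‖ ≤ C * ‖t‖ ^ 2)
    (hsmall : C * ‖t‖ ≤ a * Real.cos A / 2) : 1 + a * Real.cos A / 2 * ‖t‖ ≤ ‖τ‖ := by
  have hlin := one_add_mul_norm_mul_cos_le_norm_one_add_mul hA ht ha
  have hpert : ‖1 + a * t‖ - ‖τ‖ ≤ C * ‖t‖ ^ 2 :=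
    (norm_sub_norm_le _ _).trans (by rwa [norm_sub_rev])
  nlinarith [mul_le_mul_of_nonneg_right hsmall (norm_nonneg t)]

end Complex

theorem norm_lt_norm_mul_add_one_add {τ W e : ℂ} {δ : ℝ} (hτ : 1 + 2 * δ ≤ ‖τ‖)
    (hW : 1 < δ * ‖W‖) (he : ‖e‖ ≤ 1) : ‖W‖ < ‖τ * W + 1 + e‖ := by
  have hexpand : ‖W‖ + 2 * (δ * ‖W‖) ≤ ‖τ * W‖ := by
    rw [norm_mul]; nlinarith [mul_le_mul_of_nonneg_right hτ (norm_nonneg W)]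
  have htri : ‖τ * W‖ - ‖1 + e‖ ≤ ‖τ * W + 1 + e‖ := by
    simpa only [add_assoc] using norm_sub_le_norm_add (τ * W) (1 + e)
  have hconst : ‖1 + e‖ ≤ 2 := by
    linarith [norm_add_le 1 e, norm_one (α := ℂ)]
  linarith

/-- Repulsion at `∞` for `G(W) = τW + 1 + O(1/W)` with `τ = 1 + qt + O(t²)` when `t`
lies in a Stolz angle: for `T₀` small enough and `|W| > 1/(q d₀ |t|)`, `|G(W)| > |W|`. -/
theorem G_near_infinity_repelling (q : ℕ) (hq : 1 ≤ q) (A₀ : ℝ)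
    (hA₀ : A₀ ∈ Set.Ico 0 (π / 2)) (C C' : ℝ) (hC : 0 < C) (hC' : 0 < C') :
    ∃ T₀ > 0, ∀ (t : ℂ), t ≠ 0 → |t.arg| ≤ A₀ → ‖t‖ ≤ T₀ →
      ∀ (τ : ℂ) (G E : ℂ → ℂ),
        ‖τ - (1 + (q : ℂ) * t)‖ ≤ C * ‖t‖ ^ 2 →
        (∀ W : ℂ, W ≠ 0 → ‖E W‖ ≤ C' / ‖W‖) →
        (∀ W : ℂ, G W = τ * W + 1 + E W) →
        ∀ W : ℂ, ‖W‖ > 1 / ((q : ℝ) * (Real.cos A₀ / 4) * ‖t‖) →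
          ‖G W‖ > ‖W‖ := by
  have hq_pos : (0 : ℝ) < q := by exact_mod_cast hq
  have hA : A₀ ≤ π := by linarith [hA₀.2, pi_pos]
  set d := (q : ℝ) * (Real.cos A₀ / 4) with hd_def
  have hd : 0 < d := by
    have := Real.cos_pos_of_mem_Ioo ⟨by linarith [hA₀.1, pi_pos], hA₀.2⟩; positivity
  refine ⟨min (2 * d / C) (1 / (C' * d)), by positivity, ?_⟩
  intro t ht hargt htT τ G E hτ hE hG W hW
  have htpos : 0 < ‖t‖ := norm_pos_iff.mpr ht
  have hsmall : C * ‖t‖ ≤ q * Real.cos A₀ / 2 := by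
    have := (le_div_iff₀' hC).mp (htT.trans (min_le_left _ _)); linarith [hd_def]
  have hτ' : 1 + 2 * (d * ‖t‖) ≤ ‖τ‖ := by
    convert Complex.one_add_mul_norm_le_norm_of_norm_sub_le hA hargt hq_pos.le
      (by simpa only [Complex.ofReal_natCast] using hτ) hsmall using 2
    ring
  have hW' : 1 < d * ‖t‖ * ‖W‖ := (div_lt_iff₀' (by positivity)).mp hW
  have hWC' : C' < ‖W‖ := by
    refine lt_of_le_of_lt ?_ hW
    rw [le_div_iff₀ (by positivity)]
    have := (le_div_iff₀' (by positivity)).mp (htT.trans (min_le_right _ _)); linarith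
  have hWpos : 0 < ‖W‖ := hC'.trans hWC'
  have hEW : ‖E W‖ ≤ 1 :=
    (hE W (norm_pos_iff.mp hWpos)).trans ((div_le_one hWpos).mpr hWC'.le)
  rw [hG W]
  exact norm_lt_norm_mul_add_one_add hτ' hW' hEW
end

section
/- Let G(W) = τW + 1 + E(W) with |E(W)| ≤ (cos A₀)/8 on {|W| ≥ r̂}, where τ ∈ ℂ satisfies (|τ|−1)/(2|τ−1|) ≥ (3/8)cos A₀ and τ ≠ 1. Set B = 1/(1−τ) and d₀ = (cos A₀)/4. Then for any W with |W| ≥ r̂ and |W − B| ≥ |B|/2, one has |G(W) − B| ≥ |W − B| + d₀. -/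
open Real

/-!
Write `G W - B = τ (W - B) + E` with `|E| ≤ (cos A₀)/8`, using that `B` is fixed by `W ↦ τW + 1`.
Then `|G W - B| ≥ |W - B| + (|τ| - 1)|W - B| - (cos A₀)/8`, and since `|W - B| ≥ |B|/2 = 1/(2|τ - 1|)`
the hypothesis on `τ` makes the middle term at least `(3/8) cos A₀`.
-/

theorem mul_one_div_one_sub_add_one {𝕜 : Type*} [Field 𝕜] {τ : 𝕜} (hτ : τ ≠ 1) :
    τ * (1 / (1 - τ)) + 1 = 1 / (1 - τ) := by
  have : (1 : 𝕜) - τ ≠ 0 := sub_ne_zero.mpr hτ.symm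
  field_simp
  ring

theorem norm_sub_fixedPoint_ge_of_norm_sub_affine_le {𝕜 : Type*} [NormedDivisionRing 𝕜]
    {τ c B W y : 𝕜} {ε : ℝ} (hB : τ * B + c = B) (hy : ‖y - (τ * W + c)‖ ≤ ε) :
    ‖τ‖ * ‖W - B‖ - ε ≤ ‖y - B‖ := by
  have hsplit : y - B = τ * (W - B) + (y - (τ * W + c)) :=
    calc y - B = y - (τ * B + c) := by rw [hB]
      _ = τ * (W - B) + (y - (τ * W + c)) := by noncomm_ring
  calc ‖τ‖ * ‖W - B‖ - ε ≤ ‖τ * (W - B)‖ - ‖y - (τ * W + c)‖ := by rw [norm_mul]; linarith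
    _ ≤ ‖y - B‖ := hsplit ▸ norm_sub_le_norm_add _ _

theorem le_mul_of_le_div_of_inv_le {k a t w : ℝ} (ht : 0 < t) (hk : 0 ≤ k) (hka : k ≤ a / t)
    (hw : 1 / t ≤ w) : k ≤ a * w := by
  have ha : 0 ≤ a := by simpa using (le_div_iff₀ ht).mp (hk.trans hka)
  calc k ≤ a / t := hka
    _ = a * (1 / t) := by ring
    _ ≤ a * w := mul_le_mul_of_nonneg_left hw ha

theorem repulsion_from_fixed_point_general (A₀ : ℝ)
    (τ : ℂ) (hτ1 : τ ≠ 1)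
    (hτ : (‖τ‖ - 1) / (2 * ‖τ - 1‖) ≥ (3 / 8) * Real.cos A₀)
    (G : ℂ → ℂ) (rhat : ℝ)
    (hG : ∀ W : ℂ, rhat ≤ ‖W‖ → ‖G W - (τ * W + 1)‖ ≤ Real.cos A₀ / 8) :
    ∀ W : ℂ, rhat ≤ ‖W‖ → ‖W - 1 / (1 - τ)‖ ≥ ‖(1 : ℂ) / (1 - τ)‖ / 2 →
      ‖G W - 1 / (1 - τ)‖ ≥ ‖W - 1 / (1 - τ)‖ + Real.cos A₀ / 4 := by
  intro W hW hWB
  have hE := hG W hW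
  have hcos : 0 ≤ Real.cos A₀ := by linarith [norm_nonneg (G W - (τ * W + 1))]
  have hdist : 1 / (2 * ‖τ - 1‖) ≤ ‖W - 1 / (1 - τ)‖ := by
    rw [norm_div, norm_one, norm_sub_rev 1 τ] at hWB
    linarith [one_div_mul_one_div (2 : ℝ) ‖τ - 1‖]
  have hgain : (3 / 8) * Real.cos A₀ ≤ (‖τ‖ - 1) * ‖W - 1 / (1 - τ)‖ :=
    le_mul_of_le_div_of_inv_le (by positivity [sub_ne_zero.mpr hτ1]) (by positivity) hτ hdist
  have hrep := norm_sub_fixedPoint_ge_of_norm_sub_affine_le (mul_one_div_one_sub_add_one hτ1) hE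
  linarith

/-- Uniform repulsion away from the fixed point `B = 1/(1−τ)`:
if `|G(W) − (τW+1)| ≤ (cos A₀)/8` on `{|W| ≥ rhat}` and
`(|τ|−1)/(2|τ−1|) ≥ (3/8)cos A₀`, then for `|W| ≥ rhat` and `|W − B| ≥ |B|/2`
we have `|G(W) − B| ≥ |W − B| + d₀` with `d₀ = (cos A₀)/4`. -/
theorem repulsion_from_fixed_point (A₀ : ℝ) (hA₀ : A₀ ∈ Set.Ico 0 (π / 2))
    (τ : ℂ) (hτ1 : τ ≠ 1)
    (hτ : (‖τ‖ - 1) / (2 * ‖τ - 1‖) ≥ (3 / 8) * Real.cos A₀)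
    (G : ℂ → ℂ) (rhat : ℝ)
    (hG : ∀ W : ℂ, rhat ≤ ‖W‖ → ‖G W - (τ * W + 1)‖ ≤ Real.cos A₀ / 8) :
    ∀ W : ℂ, rhat ≤ ‖W‖ → ‖W - 1 / (1 - τ)‖ ≥ ‖(1 : ℂ) / (1 - τ)‖ / 2 →
      ‖G W - 1 / (1 - τ)‖ ≥ ‖W - 1 / (1 - τ)‖ + Real.cos A₀ / 4 :=
  repulsion_from_fixed_point_general A₀ τ hτ1 hτ G rhat hG
end
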